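/- arXiv:1709.08148 — 5 statements merged into one kernel-verified Lean document; each statement's English description precedes it below -/
import Mathlib

section
/- For a Mercer kernel G on a measurable space X with eigenvalue-eigenfunction pairs (mu_k, phi_k) with respect to L2(P), mu_1 >= mu_2 >= ... >= 0, such that sum_k mu_k < infinity and sup_k ||phi_k||_infty < infinity, and for any g in L2(P), one has E_P[g(X) g(X') G(X,X')^2] <= mu_1 * (sum_k mu_k) * (sup_k ||phi_k||_infty)^2 * ||g||_{L2(P)}^2, where X, X' are i.i.d. with law P and G(x,x') = sum_k mu_k phi_k(x) phi_k(x'). -/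
open MeasureTheory

/-!
Expanding `G²` and integrating term by term gives
`E[g(X) g(X') G(X,X')²] = ∑_{k,l} μ_k μ_l c_{kl}²` with `c_{kl} = E[φ_l φ_k g]`; the termwise
integration is legitimate because `E|φ_l φ_k g| ≤ B² E|g|` and `∑ μ_k < ∞`. Bounding `μ_l ≤ μ_0`,
Bessel's inequality for the orthonormal family `(φ_l)` applied to `φ_k g` gives
`∑_l c_{kl}² ≤ E[(φ_k g)²] ≤ B² E[g²]` for each `k`, and summing over `k` against `μ_k` finishes.
-/

section

variable {α β ι : Type*}

theorem integral_prod_tsum_mul [MeasurableSpace α] [MeasurableSpace β] [Countable ι]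
    {μ : Measure α} {ν : Measure β} [SFinite μ] [SFinite ν] (a : ι → ℝ) {f : ι → α → ℝ}
    {g : ι → β → ℝ} (hf : ∀ i, Integrable (f i) μ) (hg : ∀ i, Integrable (g i) ν)
    (hsum : Summable fun i => |a i| * (∫ x, |f i x| ∂μ) * ∫ y, |g i y| ∂ν) :
    ∫ z, ∑' i, a i * f i z.1 * g i z.2 ∂μ.prod ν
      = ∑' i, a i * (∫ x, f i x ∂μ) * ∫ y, g i y ∂ν := by
  have hnorm : ∀ i, ∫ z, ‖a i * f i z.1 * g i z.2‖ ∂μ.prod ν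
      = |a i| * (∫ x, |f i x| ∂μ) * ∫ y, |g i y| ∂ν := fun i => by
    simp only [Real.norm_eq_abs, abs_mul, mul_assoc]
    rw [integral_const_mul, integral_prod_mul (fun x => |f i x|) (fun y => |g i y|)]
  rw [← integral_tsum_of_summable_integral_norm
    (fun i => ((hf i).const_mul (a i)).mul_prod (hg i)) (by simpa only [hnorm] using hsum)]
  refine tsum_congr fun i => ?_
  rw [integral_prod_mul (fun x => a i * f i x) (g i), integral_const_mul]

theorem mul_mul_sq_tsum_eq_tsum_prod {μ : ι → ℝ} (hμ0 : ∀ k, 0 ≤ μ k) (hμsum : Summable μ)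
    {φ : ι → α → ℝ} {B : ℝ} (hB : ∀ k x, |φ k x| ≤ B) (g : α → ℝ) (x y : α) :
    g x * g y * (∑' k, μ k * φ k x * φ k y) ^ 2
      = ∑' q : ι × ι,
          μ q.1 * μ q.2 * (φ q.2 x * (φ q.1 x * g x)) * (φ q.2 y * (φ q.1 y * g y)) := by
  have hsum : Summable fun k => ‖μ k * φ k x * φ k y‖ := by
    refine Summable.of_nonneg_of_le (fun _ => norm_nonneg _) (fun k => ?_)
      (hμsum.mul_right (B * B))
    rw [norm_mul, norm_mul, Real.norm_of_nonneg (hμ0 k), mul_assoc]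
    exact mul_le_mul_of_nonneg_left
      (mul_le_mul (hB k x) (hB k y) (abs_nonneg _) ((abs_nonneg _).trans (hB k x))) (hμ0 k)
  rw [sq, tsum_mul_tsum_of_summable_norm hsum hsum, ← tsum_mul_left]
  exact tsum_congr fun q => by ring

theorem tsum_prod_mul_mul_le {m M : ℝ} {μ : ι → ℝ} (hμ0 : ∀ k, 0 ≤ μ k) (hμm : ∀ k, μ k ≤ m)
    (hμsum : Summable μ) {c : ι → ι → ℝ} (hc0 : ∀ k l, 0 ≤ c k l)
    (hc : ∀ k, Summable (c k)) (hcM : ∀ k, ∑' l, c k l ≤ M) :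
    ∑' q : ι × ι, μ q.1 * μ q.2 * c q.1 q.2 ≤ m * (∑' k, μ k) * M := by
  set T : ι × ι → ℝ := fun q => μ q.1 * μ q.2 * c q.1 q.2
  have hT0 : 0 ≤ T := fun q => mul_nonneg (mul_nonneg (hμ0 q.1) (hμ0 q.2)) (hc0 q.1 q.2)
  have hTle : ∀ k l, T (k, l) ≤ μ k * m * c k l := fun k l =>
    mul_le_mul_of_nonneg_right (mul_le_mul_of_nonneg_left (hμm l) (hμ0 k)) (hc0 k l)
  have hrow : ∀ k, Summable fun l => T (k, l) := fun k =>
    Summable.of_nonneg_of_le (fun l => hT0 (k, l)) (hTle k) ((hc k).mul_left _)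
  have hrow_le : ∀ k, ∑' l, T (k, l) ≤ μ k * (m * M) := fun k => by
    calc ∑' l, T (k, l) ≤ ∑' l, μ k * m * c k l :=
          (hrow k).tsum_le_tsum (hTle k) ((hc k).mul_left _)
      _ ≤ μ k * (m * M) := by
          rw [tsum_mul_left, mul_assoc]
          exact mul_le_mul_of_nonneg_left
            (mul_le_mul_of_nonneg_left (hcM k) ((hμ0 k).trans (hμm k))) (hμ0 k)
  have hcols : Summable fun k => ∑' l, T (k, l) :=
    Summable.of_nonneg_of_le (fun k => tsum_nonneg fun l => hT0 (k, l)) hrow_le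
      (hμsum.mul_right _)
  have hT : Summable T := (summable_prod_of_nonneg hT0).2 ⟨hrow, hcols⟩
  calc ∑' q, T q = ∑' k, ∑' l, T (k, l) := hT.tsum_prod
    _ ≤ ∑' k, μ k * (m * M) := hcols.tsum_le_tsum hrow_le (hμsum.mul_right _)
    _ = m * (∑' k, μ k) * M := by rw [tsum_mul_right]; ring

end

section

variable {X ι : Type*} [MeasurableSpace X] {P : Measure X}

theorem integral_abs_mul_le_of_abs_le {h f : X → ℝ} {C : ℝ} (hh : ∀ x, |h x| ≤ C)
    (hf : Integrable f P) : ∫ x, |h x * f x| ∂P ≤ C * ∫ x, |f x| ∂P := by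
  rw [← integral_const_mul]
  refine integral_mono_of_nonneg (ae_of_all _ fun x => abs_nonneg _) (hf.abs.const_mul C)
    (ae_of_all _ fun x => ?_)
  simp only [abs_mul]
  exact mul_le_mul_of_nonneg_right (hh x) (abs_nonneg _)

theorem integral_sq_mul_le_of_abs_le {h f : X → ℝ} {C : ℝ} (hh : ∀ x, |h x| ≤ C)
    (hf : Integrable (fun x => f x ^ 2) P) :
    ∫ x, (h x * f x) ^ 2 ∂P ≤ C ^ 2 * ∫ x, f x ^ 2 ∂P := by
  rw [← integral_const_mul]
  refine integral_mono_of_nonneg (ae_of_all _ fun x => sq_nonneg _) (hf.const_mul _)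
    (ae_of_all _ fun x => ?_)
  simp only [mul_pow]
  exact mul_le_mul_of_nonneg_right (sq_le_sq' (abs_le.1 (hh x)).1 (abs_le.1 (hh x)).2)
    (sq_nonneg _)

theorem summable_abs_mul_mul_integral_abs_mul {μ : ι → ℝ} (hμ0 : ∀ k, 0 ≤ μ k)
    (hμsum : Summable μ) {ψ : ι → ι → X → ℝ} {K : ℝ} (hψ : ∀ k l, ∫ x, |ψ k l x| ∂P ≤ K) :
    Summable fun q : ι × ι =>
      |μ q.1 * μ q.2| * (∫ x, |ψ q.1 q.2 x| ∂P) * ∫ x, |ψ q.1 q.2 x| ∂P := by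
  refine Summable.of_nonneg_of_le (fun q => by positivity) (fun q => ?_)
    ((hμsum.mul_of_nonneg hμsum hμ0 hμ0).mul_right (K * K))
  have hμμ := mul_nonneg (hμ0 q.1) (hμ0 q.2)
  rw [abs_of_nonneg hμμ, mul_assoc]
  exact mul_le_mul_of_nonneg_left
    (mul_self_le_mul_self (integral_nonneg fun _ => abs_nonneg _) (hψ _ _)) hμμ

theorem inner_toLp_eq_integral_mul {f g : X → ℝ} (hf : MemLp f 2 P) (hg : MemLp g 2 P) :
    inner ℝ (hf.toLp f) (hg.toLp g) = ∫ x, f x * g x ∂P := by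
  rw [L2.inner_def]
  refine integral_congr_ae ?_
  filter_upwards [hf.coeFn_toLp, hg.coeFn_toLp] with x hfx hgx
  simp [hfx, hgx, mul_comm]

variable [DecidableEq ι]

theorem orthonormal_toLp {φ : ι → X → ℝ} (hφ : ∀ i, MemLp (φ i) 2 P)
    (horth : ∀ i j, ∫ x, φ i x * φ j x ∂P = if i = j then 1 else 0) :
    Orthonormal ℝ fun i => (hφ i).toLp (φ i) := by
  rw [orthonormal_iff_ite]
  intro i j
  rw [inner_toLp_eq_integral_mul, horth]

theorem summable_sq_integral_mul {φ : ι → X → ℝ} (hφ : ∀ i, MemLp (φ i) 2 P)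
    (horth : ∀ i j, ∫ x, φ i x * φ j x ∂P = if i = j then 1 else 0) {f : X → ℝ}
    (hf : MemLp f 2 P) : Summable fun i => (∫ x, φ i x * f x ∂P) ^ 2 := by
  simpa only [inner_toLp_eq_integral_mul, Real.norm_eq_abs, sq_abs] using
    (orthonormal_toLp hφ horth).inner_products_summable (x := hf.toLp f)

theorem tsum_sq_integral_mul_le {φ : ι → X → ℝ} (hφ : ∀ i, MemLp (φ i) 2 P)
    (horth : ∀ i j, ∫ x, φ i x * φ j x ∂P = if i = j then 1 else 0) {f : X → ℝ}
    (hf : MemLp f 2 P) : ∑' i, (∫ x, φ i x * f x ∂P) ^ 2 ≤ ∫ x, f x ^ 2 ∂P := by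
  simpa only [← real_inner_self_eq_norm_sq, inner_toLp_eq_integral_mul, Real.norm_eq_abs, sq_abs,
    ← sq] using (orthonormal_toLp hφ horth).tsum_inner_products_le (hf.toLp f)

end

theorem kernel_square_bilinear_bound_general
    {X : Type*} [MeasurableSpace X] (P : Measure X) [IsProbabilityMeasure P]
    (μ : ℕ → ℝ) (hμ0 : ∀ k, 0 ≤ μ k) (hμmono : Antitone μ) (hμsum : Summable μ)
    (φ : ℕ → X → ℝ) (hφmeas : ∀ k, Measurable (φ k))
    (horth : ∀ k l, ∫ x, φ k x * φ l x ∂P = if k = l then 1 else 0)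
    (B : ℝ) (hB : ∀ k x, |φ k x| ≤ B)
    (G : X → X → ℝ) (hG : ∀ x x', G x x' = ∑' k, μ k * φ k x * φ k x')
    (g : X → ℝ) (hg : MemLp g 2 P) :
    ∫ p : X × X, g p.1 * g p.2 * (G p.1 p.2) ^ 2 ∂(P.prod P)
      ≤ μ 0 * (∑' k, μ k) * B ^ 2 * ∫ x, (g x) ^ 2 ∂P := by
  have hB0 : 0 ≤ B := (abs_nonneg _).trans (hB 0 (nonempty_of_isProbabilityMeasure P).some)
  have hφ : ∀ k, MemLp (φ k) ⊤ P := fun k =>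
    memLp_top_of_bound (hφmeas k).aestronglyMeasurable B (ae_of_all _ (hB k))
  have hφg : ∀ k, MemLp (fun x => φ k x * g x) 2 P := fun k => hg.mul' (hφ k)
  have hφL2 : ∀ k, MemLp (φ k) 2 P := fun k => (hφ k).mono_exponent le_top
  set ψ : ℕ → ℕ → X → ℝ := fun k l x => φ l x * (φ k x * g x)
  have hψ : ∀ k l, Integrable (ψ k l) P := fun k l => (hφL2 l).integrable_mul (hφg k)
  have hψ_abs : ∀ k l, ∫ x, |ψ k l x| ∂P ≤ B * (B * ∫ x, |g x| ∂P) := fun k l =>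
    (integral_abs_mul_le_of_abs_le (hB l) ((hφg k).integrable one_le_two)).trans <|
      mul_le_mul_of_nonneg_left
        (integral_abs_mul_le_of_abs_le (hB k) (hg.integrable one_le_two)) hB0
  calc ∫ p : X × X, g p.1 * g p.2 * (G p.1 p.2) ^ 2 ∂(P.prod P)
      = ∫ p : X × X, ∑' q : ℕ × ℕ, μ q.1 * μ q.2 * ψ q.1 q.2 p.1 * ψ q.1 q.2 p.2
          ∂(P.prod P) := by
        simp only [hG, mul_mul_sq_tsum_eq_tsum_prod hμ0 hμsum hB, ψ]
    _ = ∑' q : ℕ × ℕ, μ q.1 * μ q.2 * (∫ x, ψ q.1 q.2 x ∂P) * ∫ x, ψ q.1 q.2 x ∂P :=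
        integral_prod_tsum_mul _ (fun q => hψ _ _) (fun q => hψ _ _)
          (summable_abs_mul_mul_integral_abs_mul hμ0 hμsum hψ_abs)
    _ = ∑' q : ℕ × ℕ, μ q.1 * μ q.2 * (∫ x, ψ q.1 q.2 x ∂P) ^ 2 := tsum_congr fun q => by ring
    _ ≤ μ 0 * (∑' k, μ k) * (B ^ 2 * ∫ x, g x ^ 2 ∂P) :=
        tsum_prod_mul_mul_le hμ0 (fun k => hμmono k.zero_le) hμsum (fun _ _ => sq_nonneg _)
          (fun k => summable_sq_integral_mul hφL2 horth (hφg k))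
          (fun k => (tsum_sq_integral_mul_le hφL2 horth (hφg k)).trans
            (integral_sq_mul_le_of_abs_le (hB k) hg.integrable_sq))
    _ = μ 0 * (∑' k, μ k) * B ^ 2 * ∫ x, g x ^ 2 ∂P := by ring

/-- If `G(x,x') = ∑ₖ μₖ φₖ(x) φₖ(x')` with `(φₖ)` orthonormal in `L²(P)`,
`(μₖ)` nonincreasing, nonnegative, summable, and `sup_k ‖φₖ‖_∞ ≤ B`, then for any
`g ∈ L²(P)`, `E[g(X) g(X') G(X,X')²] ≤ μ₁ (∑ₖ μₖ) B² ‖g‖²_{L²(P)}`. -/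
theorem kernel_square_bilinear_bound
    {X : Type*} [MeasurableSpace X] (P : Measure X) [IsProbabilityMeasure P]
    (μ : ℕ → ℝ) (hμ0 : ∀ k, 0 ≤ μ k) (hμmono : Antitone μ) (hμsum : Summable μ)
    (φ : ℕ → X → ℝ) (hφmeas : ∀ k, Measurable (φ k))
    (horth : ∀ k l, ∫ x, φ k x * φ l x ∂P = if k = l then 1 else 0)
    (B : ℝ) (hB : ∀ k x, |φ k x| ≤ B)
    (G : X → X → ℝ) (hG : ∀ x x', G x x' = ∑' k, μ k * φ k x * φ k x')
    (g : X → ℝ) (hg : MemLp g 2 P)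
    (hint : Integrable (fun p : X × X => g p.1 * g p.2 * (G p.1 p.2) ^ 2) (P.prod P)) :
    ∫ p : X × X, g p.1 * g p.2 * (G p.1 p.2) ^ 2 ∂(P.prod P)
      ≤ μ 0 * (∑' k, μ k) * B ^ 2 * ∫ x, (g x) ^ 2 ∂P :=
  kernel_square_bilinear_bound_general P μ hμ0 hμmono hμsum φ hφmeas horth B hB G hG g hg
end

section
/- Suppose lambda_k satisfies c1 k^{-2s} <= lambda_k <= c2 k^{-2s} for all k >= 1, with s > 1/2 and 0 < c1 <= c2. Then there exist constants 0 < A <= B such that for all sufficiently small rho > 0, A rho^{-1/s} <= sum_{k>=1} (lambda_k/(lambda_k + rho^2))^2 <= B rho^{-1/s}. -/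
/-!
Write `r = ρ ^ (-1/s)`. While `λₖ ≥ ρ²` the term `(λₖ / (λₖ + ρ²))²` is at least `1/4`, and the
lower bound `λₖ ≥ c₁ (k+1)^(-2s)` guarantees this for the first `≍ r` indices. Conversely each
term is at most `min 1 ((λₖ / ρ²)²)`: summing `1` over the first `⌈r⌉` indices and
`c₂² ρ⁻⁴ (k+1)^(-4s)` over the rest, a tail bounded by the integral of `x^(-4s)` over `(⌈r⌉, ∞)`,
gives `O(r)`.
-/

open Filter Topology Set

theorem sq_div_add_le_one {x y : ℝ} (hx : 0 ≤ x) (hy : 0 ≤ y) : (x / (x + y)) ^ 2 ≤ 1 := by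
  have h0 : 0 ≤ x / (x + y) := by positivity
  have h1 : x / (x + y) ≤ 1 := div_le_one_of_le₀ (by linarith) (by positivity)
  nlinarith

theorem sq_div_add_le_sq_div {x y : ℝ} (hx : 0 ≤ x) (hy : 0 < y) :
    (x / (x + y)) ^ 2 ≤ (x / y) ^ 2 := by
  gcongr
  linarith

theorem one_fourth_le_sq_div_add {x y : ℝ} (hy : 0 < y) (hyx : y ≤ x) :
    1 / 4 ≤ (x / (x + y)) ^ 2 := by
  have : 1 / 2 ≤ x / (x + y) := by
    rw [le_div_iff₀ (by linarith)]
    linarith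
  nlinarith

theorem tsum_nat_add_rpow_neg_le {p : ℝ} (hp : 1 < p) {N : ℕ} (hN : 0 < N) :
    ∑' k : ℕ, ((k + N + 1 : ℕ) : ℝ) ^ (-p) ≤ (N : ℝ) ^ (1 - p) / (p - 1) := by
  have hN' : (0 : ℝ) < N := by exact_mod_cast hN
  have anti : AntitoneOn (fun x : ℝ => x ^ (-p)) (Ici (N : ℝ)) := fun x hx y _ hxy =>
    Real.rpow_le_rpow_of_nonpos (hN'.trans_le hx) hxy (by linarith)
  calc ∑' k : ℕ, ((k + N + 1 : ℕ) : ℝ) ^ (-p)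
      ≤ ∫ x in Ioi (N : ℝ), x ^ (-p) :=
        anti.tsum_comp_add_le_integral N (integrableOn_Ioi_rpow_of_lt (by linarith) hN')
          fun x hx => Real.rpow_nonneg (hN'.trans hx).le _
    _ = (N : ℝ) ^ (1 - p) / (p - 1) := by
        rw [integral_Ioi_rpow_of_lt (by linarith) hN', neg_div, ← div_neg, neg_add_eq_sub,
          neg_sub]

theorem summable_of_nonneg_of_le_mul_rpow {f : ℕ → ℝ} {C p : ℝ} (hp : 1 < p)
    (hf0 : ∀ k, 0 ≤ f k) (hfC : ∀ k, f k ≤ C * ((k : ℝ) + 1) ^ (-p)) : Summable f := by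
  have h : Summable fun k : ℕ => ((k : ℝ) + 1) ^ (-p) := by
    simpa using (summable_nat_add_iff 1).2 (Real.summable_nat_rpow.2 (neg_lt_neg hp))
  exact .of_nonneg_of_le hf0 hfC (h.mul_left C)

theorem tsum_le_of_le_one_of_le_mul_rpow {f : ℕ → ℝ} {C p : ℝ} (hp : 1 < p)
    (hf0 : ∀ k, 0 ≤ f k) (hf1 : ∀ k, f k ≤ 1) (hfC : ∀ k, f k ≤ C * ((k : ℝ) + 1) ^ (-p))
    {N : ℕ} (hN : 0 < N) : ∑' k, f k ≤ N + C * ((N : ℝ) ^ (1 - p) / (p - 1)) := by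
  have hf := summable_of_nonneg_of_le_mul_rpow hp hf0 hfC
  have hC : 0 ≤ C := by simpa using (hf0 0).trans (hfC 0)
  have head : ∑ k ∈ Finset.range N, f k ≤ N := by
    simpa using Finset.sum_le_sum fun k (_ : k ∈ Finset.range N) => hf1 k
  have tail : ∑' k, f (k + N) ≤ C * ∑' k : ℕ, ((k + N + 1 : ℕ) : ℝ) ^ (-p) := by
    rw [← tsum_mul_left]
    refine ((summable_nat_add_iff N).2 hf).tsum_le_tsum (fun k => ?_) ?_
    · simpa using hfC (k + N)
    · exact ((summable_nat_add_iff (N + 1)).2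
        (Real.summable_nat_rpow.2 (neg_lt_neg hp))).mul_left C
  rw [← hf.sum_add_tsum_nat_add N]
  exact add_le_add head
    (tail.trans (mul_le_mul_of_nonneg_left (tsum_nat_add_rpow_neg_le hp hN) hC))

theorem sq_le_mul_rpow_neg_of_le {c s ρ x : ℝ} (hc : 0 < c) (hs : 0 < s) (hρ : 0 < ρ)
    (hx : 0 < x) (hxρ : x ≤ c ^ (2 * s)⁻¹ * ρ ^ (-(1 / s))) : ρ ^ 2 ≤ c * x ^ (-(2 * s)) := by
  have hpow : x ^ (2 * s) ≤ c * (ρ ^ 2)⁻¹ := by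
    calc x ^ (2 * s) ≤ (c ^ (2 * s)⁻¹ * ρ ^ (-(1 / s))) ^ (2 * s) := by gcongr
      _ = c * (ρ ^ 2)⁻¹ := by
        rw [Real.mul_rpow (by positivity) (by positivity), Real.rpow_inv_rpow hc.le (by positivity),
          ← Real.rpow_mul hρ.le, show -(1 / s) * (2 * s) = -(2 : ℕ) by field_simp; norm_num,
          Real.rpow_neg hρ.le, Real.rpow_natCast]
  rw [Real.rpow_neg hx.le, ← div_eq_mul_inv, le_div_iff₀ (by positivity)]
  calc ρ ^ 2 * x ^ (2 * s) ≤ ρ ^ 2 * (c * (ρ ^ 2)⁻¹) := by gcongr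
    _ = c := by field_simp

theorem sq_div_add_sq_le_of_le_mul_rpow {c s ρ x y : ℝ} (hx : 0 ≤ x) (hy : 0 ≤ y)
    (hxc : x ≤ c * y ^ (-(2 * s))) (hρ : 0 < ρ) :
    (x / (x + ρ ^ 2)) ^ 2 ≤ c ^ 2 / ρ ^ 4 * y ^ (-(4 * s)) := by
  calc (x / (x + ρ ^ 2)) ^ 2 ≤ (x / ρ ^ 2) ^ 2 := sq_div_add_le_sq_div hx (by positivity)
    _ ≤ (c * y ^ (-(2 * s)) / ρ ^ 2) ^ 2 := by gcongr
    _ = c ^ 2 / ρ ^ 4 * y ^ (-(4 * s)) := by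
      rw [div_pow, mul_pow, ← Real.rpow_natCast (y ^ _), ← Real.rpow_mul hy]
      ring_nf

theorem le_tsum_sq_div_add_sq {s c1 ρ : ℝ} {lam : ℕ → ℝ} (hs : 0 < s) (hc1 : 0 < c1)
    (hlow : ∀ k : ℕ, c1 * ((k : ℝ) + 1) ^ (-(2 * s)) ≤ lam k) (hρ : 0 < ρ)
    (hρc : 2 ≤ c1 ^ (2 * s)⁻¹ * ρ ^ (-(1 / s)))
    (hsum : Summable fun k => (lam k / (lam k + ρ ^ 2)) ^ 2) :
    c1 ^ (2 * s)⁻¹ / 8 * ρ ^ (-(1 / s)) ≤ ∑' k, (lam k / (lam k + ρ ^ 2)) ^ 2 := by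
  set T := c1 ^ (2 * s)⁻¹ * ρ ^ (-(1 / s))
  set M := ⌊T⌋₊
  have hterm : ∀ k ∈ Finset.range M, 1 / 4 ≤ (lam k / (lam k + ρ ^ 2)) ^ 2 := fun k hk => by
    have hkT : (k : ℝ) + 1 ≤ T := by
      exact_mod_cast (Nat.le_floor_iff (by linarith)).1 (Finset.mem_range.1 hk)
    exact one_fourth_le_sq_div_add (by positivity)
      ((sq_le_mul_rpow_neg_of_le hc1 hs hρ (by positivity) hkT).trans (hlow k))
  have hM : T / 2 ≤ M := by linarith [Nat.sub_one_lt_floor T]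
  calc c1 ^ (2 * s)⁻¹ / 8 * ρ ^ (-(1 / s)) = T / 2 * (1 / 4) := by ring
    _ ≤ M * (1 / 4) := by gcongr
    _ ≤ ∑ k ∈ Finset.range M, (lam k / (lam k + ρ ^ 2)) ^ 2 := by
      simpa using Finset.card_nsmul_le_sum _ _ _ hterm
    _ ≤ ∑' k, (lam k / (lam k + ρ ^ 2)) ^ 2 := hsum.sum_le_tsum _ fun k _ => sq_nonneg _

theorem tsum_sq_div_add_sq_le {s c2 ρ : ℝ} {lam : ℕ → ℝ} (hs : 1 / 2 < s)
    (hlam : ∀ k, 0 ≤ lam k) (hup : ∀ k : ℕ, lam k ≤ c2 * ((k : ℝ) + 1) ^ (-(2 * s)))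
    (hρ : 0 < ρ) (hρ1 : ρ ≤ 1) :
    ∑' k, (lam k / (lam k + ρ ^ 2)) ^ 2 ≤ (2 + c2 ^ 2 / (4 * s - 1)) * ρ ^ (-(1 / s)) := by
  have hs0 : 0 < s := by linarith
  set r := ρ ^ (-(1 / s))
  have hr : 1 ≤ r := Real.one_le_rpow_of_pos_of_le_one_of_nonpos hρ hρ1 (by simp; positivity)
  set N := ⌈r⌉₊
  have hN : 0 < N := Nat.ceil_pos.2 (by linarith)
  have hN2 : (N : ℝ) ≤ 2 * r := by linarith [Nat.ceil_lt_add_one (show 0 ≤ r by linarith)]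
  have hr_pow : r ^ (1 - 4 * s) = ρ ^ 4 * r := by
    rw [← Real.rpow_mul hρ.le, show -(1 / s) * (1 - 4 * s) = (4 : ℕ) + -(1 / s) by
      field_simp; push_cast; ring, Real.rpow_add hρ, Real.rpow_natCast]
  calc ∑' k, (lam k / (lam k + ρ ^ 2)) ^ 2
      ≤ N + c2 ^ 2 / ρ ^ 4 * ((N : ℝ) ^ (1 - 4 * s) / (4 * s - 1)) :=
        tsum_le_of_le_one_of_le_mul_rpow (by linarith) (fun k => sq_nonneg _)
          (fun k => sq_div_add_le_one (hlam k) (sq_nonneg ρ))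
          (fun k => sq_div_add_sq_le_of_le_mul_rpow (hlam k) (by positivity) (hup k) hρ) hN
    _ ≤ 2 * r + c2 ^ 2 / ρ ^ 4 * (r ^ (1 - 4 * s) / (4 * s - 1)) := by
        have hNr : (N : ℝ) ^ (1 - 4 * s) ≤ r ^ (1 - 4 * s) :=
          Real.rpow_le_rpow_of_nonpos (by positivity) (Nat.le_ceil r) (by linarith)
        have h4s : 0 < 4 * s - 1 := by linarith
        gcongr
    _ = (2 + c2 ^ 2 / (4 * s - 1)) * r := by
        rw [hr_pow]
        field_simp

theorem variance_normalization_order_general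
    (s c1 c2 : ℝ) (hs : 1 / 2 < s) (hc1 : 0 < c1)
    (lam : ℕ → ℝ)
    (hlow : ∀ k : ℕ, c1 * ((k : ℝ) + 1) ^ (-(2 * s)) ≤ lam k)
    (hup : ∀ k : ℕ, lam k ≤ c2 * ((k : ℝ) + 1) ^ (-(2 * s))) :
    ∃ A B : ℝ, 0 < A ∧ A ≤ B ∧ ∃ ρ₀ : ℝ, 0 < ρ₀ ∧
      ∀ ρ : ℝ, 0 < ρ → ρ < ρ₀ →
        A * ρ ^ (-(1 / s)) ≤ (∑' k, (lam k / (lam k + ρ ^ 2)) ^ 2) ∧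
        (∑' k, (lam k / (lam k + ρ ^ 2)) ^ 2) ≤ B * ρ ^ (-(1 / s)) := by
  have hs0 : 0 < s := by linarith
  set c := c1 ^ (2 * s)⁻¹
  have hc : 0 < c := by positivity
  have hsmall : ∀ᶠ ρ in 𝓝[>] 0, ρ ∈ Ioo 0 1 ∧ 2 / c ≤ ρ ^ (-(1 / s)) :=
    Eventually.and (Ioo_mem_nhdsGT one_pos)
      ((tendsto_rpow_neg_nhdsGT_zero (by simp; positivity)).eventually_ge_atTop _)
  obtain ⟨ρ₀, hρ₀, hρ₀small⟩ := (nhdsGT_basis (0 : ℝ)).eventually_iff.1 hsmall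
  refine ⟨c / 8, max (c / 8) (2 + c2 ^ 2 / (4 * s - 1)), by positivity, le_max_left _ _,
    ρ₀, hρ₀, fun ρ hρ hρρ₀ => ?_⟩
  obtain ⟨⟨-, hρ1⟩, hρc⟩ := hρ₀small ⟨hρ, hρρ₀⟩
  have hlam : ∀ k, 0 ≤ lam k := fun k => (by positivity : 0 ≤ c1 * _).trans (hlow k)
  have hsum : Summable fun k => (lam k / (lam k + ρ ^ 2)) ^ 2 :=
    summable_of_nonneg_of_le_mul_rpow (p := 4 * s) (by linarith) (fun k => sq_nonneg _)
      fun k => sq_div_add_sq_le_of_le_mul_rpow (hlam k) (by positivity) (hup k) hρ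
  refine ⟨le_tsum_sq_div_add_sq hs0 hc1 hlow hρ ?_ hsum, ?_⟩
  · rwa [div_le_iff₀' hc] at hρc
  · exact (tsum_sq_div_add_sq_le hs hlam hup hρ hρ1.le).trans
      (by gcongr; exact le_max_right _ _)

/-- If `λₖ ≍ k^{-2s}` with `s > 1/2`, then `∑ₖ (λₖ/(λₖ+ρ²))² ≍ ρ^{-1/s}` for
small `ρ > 0`. -/
theorem variance_normalization_order
    (s c1 c2 : ℝ) (hs : 1 / 2 < s) (hc1 : 0 < c1) (hc12 : c1 ≤ c2)
    (lam : ℕ → ℝ)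
    (hlow : ∀ k : ℕ, c1 * ((k : ℝ) + 1) ^ (-(2 * s)) ≤ lam k)
    (hup : ∀ k : ℕ, lam k ≤ c2 * ((k : ℝ) + 1) ^ (-(2 * s))) :
    ∃ A B : ℝ, 0 < A ∧ A ≤ B ∧ ∃ ρ₀ : ℝ, 0 < ρ₀ ∧
      ∀ ρ : ℝ, 0 < ρ → ρ < ρ₀ →
        A * ρ ^ (-(1 / s)) ≤ (∑' k, (lam k / (lam k + ρ ^ 2)) ^ 2) ∧
        (∑' k, (lam k / (lam k + ρ ^ 2)) ^ 2) ≤ B * ρ ^ (-(1 / s)) :=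
  variance_normalization_order_general s c1 c2 hs hc1 lam hlow hup
end

section
/- Suppose lambda_k satisfies c1 k^{-2s} <= lambda_k <= c2 k^{-2s} for all k >= 1 with s > 1/2. Then there exist constants 0 < A <= B such that for all sufficiently small rho > 0, A rho^{-1/s} <= sum_{k>=1} lambda_k/(lambda_k + rho^2) <= B rho^{-1/s}. -/
/-- Bernoulli-type step inequality for the tail comparison. -/
lemma moderated_bern {s a : ℝ} (hs : 1 / 2 < s) (ha : 1 ≤ a) :
    (2 * s - 1) * (a + 1) ^ (-(2 * s)) ≤ a ^ (1 - 2 * s) - (a + 1) ^ (1 - 2 * s) := by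
  have ha0 : (0 : ℝ) < a := lt_of_lt_of_le one_pos ha
  have hb0 : (0 : ℝ) < a + 1 := by linarith
  set p := 2 * s with hp_def
  have hp : (1 : ℝ) ≤ p := by simp only [hp_def]; linarith
  have hP : 0 < (a + 1) ^ p := Real.rpow_pos_of_pos hb0 p
  have hQ : 0 < a ^ p := Real.rpow_pos_of_pos ha0 p
  -- Bernoulli: (1 + 1/a)^p ≥ 1 + p/a
  have hB : 1 + p * (1 / a) ≤ (1 + 1 / a) ^ p := by
    have h1a0 : (0:ℝ) ≤ 1 / a := by positivity
    exact one_add_mul_self_le_rpow_one_add (by linarith) hp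
  have h1a : (1 : ℝ) + 1 / a = (a + 1) / a := by field_simp
  have hdiv : (a + p) / a ≤ (a + 1) ^ p / a ^ p := by
    calc (a + p) / a = 1 + p * (1 / a) := by field_simp
      _ ≤ (1 + 1 / a) ^ p := hB
      _ = (a + 1) ^ p / a ^ p := by rw [h1a, Real.div_rpow hb0.le ha0.le]
  have key : (a + p) * a ^ p ≤ a * (a + 1) ^ p := by
    rw [div_le_div_iff₀ ha0 hQ] at hdiv
    linarith
  have e1 : (a + 1) ^ (-p) = ((a + 1) ^ p)⁻¹ := Real.rpow_neg hb0.le p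
  have e2 : a ^ (1 - p) = a * (a ^ p)⁻¹ := by
    rw [show (1 - p) = 1 + -p by ring, Real.rpow_add ha0, Real.rpow_one,
      Real.rpow_neg ha0.le]
  have e3 : (a + 1) ^ (1 - p) = (a + 1) * ((a + 1) ^ p)⁻¹ := by
    rw [show (1 - p) = 1 + -p by ring, Real.rpow_add hb0, Real.rpow_one,
      Real.rpow_neg hb0.le]
  rw [e1, e2, e3]
  rw [show (2 * s - 1) * ((a + 1) ^ p)⁻¹ = (p - 1) / ((a + 1) ^ p) by
    rw [hp_def]; ring,
    show a * (a ^ p)⁻¹ - (a + 1) * ((a + 1) ^ p)⁻¹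
      = a / a ^ p - (a + 1) / (a + 1) ^ p by
    rw [div_eq_mul_inv, div_eq_mul_inv]]
  rw [div_sub_div _ _ hQ.ne' hP.ne', div_le_div_iff₀ hP (mul_pos hQ hP)]
  nlinarith [mul_le_mul_of_nonneg_right key hP.le, hP, hQ]

/-- Tail bound for the `p`-series via telescoping. -/
lemma moderated_tail {s : ℝ} (hs : 1 / 2 < s) (M : ℕ) (hM : 1 ≤ M) :
    ∑' i : ℕ, (((i + M : ℕ) : ℝ) + 1) ^ (-(2 * s)) ≤ (M : ℝ) ^ (1 - 2 * s) / (2 * s - 1) := by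
  have hs1 : (0 : ℝ) < 2 * s - 1 := by linarith
  have hM1 : (1 : ℝ) ≤ (M : ℝ) := by exact_mod_cast hM
  apply Real.tsum_le_of_sum_range_le (fun n => Real.rpow_nonneg (by positivity) _)
  intro n
  set f : ℕ → ℝ := fun i => ((i : ℝ) + M) ^ (1 - 2 * s) / (2 * s - 1) with hf_def
  have step : ∀ i ∈ Finset.range n,
      (((i + M : ℕ) : ℝ) + 1) ^ (-(2 * s)) ≤ f i - f (i + 1) := by
    intro i _
    have ha : (1 : ℝ) ≤ (i : ℝ) + M := by
      have : (0 : ℝ) ≤ (i : ℝ) := Nat.cast_nonneg i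
      linarith
    have hb := moderated_bern hs ha
    have hcast : (((i + M : ℕ) : ℝ) + 1) = ((i : ℝ) + M) + 1 := by push_cast; ring
    have hcast2 : ((i + 1 : ℕ) : ℝ) + (M : ℝ) = ((i : ℝ) + M) + 1 := by push_cast; ring
    rw [hcast, hf_def]
    simp only []
    rw [hcast2]
    rw [div_sub_div_same, le_div_iff₀ hs1]
    linarith [hb]
  calc ∑ i ∈ Finset.range n, (((i + M : ℕ) : ℝ) + 1) ^ (-(2 * s))
      ≤ ∑ i ∈ Finset.range n, (f i - f (i + 1)) := Finset.sum_le_sum step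
    _ = f 0 - f n := Finset.sum_range_sub' f n
    _ ≤ f 0 := by
        have : 0 ≤ f n := div_nonneg (Real.rpow_nonneg (by positivity) _) hs1.le
        linarith
    _ = (M : ℝ) ^ (1 - 2 * s) / (2 * s - 1) := by simp [hf_def]

set_option maxHeartbeats 1000000 in
/-- If `λₖ ≍ k^{-2s}` with `s > 1/2`, then the trace of the moderated kernel
satisfies `∑ₖ λₖ/(λₖ+ρ²) ≍ ρ^{-1/s}` for small `ρ > 0`. -/
theorem moderated_trace_order
    (s c1 c2 : ℝ) (hs : 1 / 2 < s) (hc1 : 0 < c1) (hc12 : c1 ≤ c2)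
    (lam : ℕ → ℝ)
    (hlow : ∀ k : ℕ, c1 * ((k : ℝ) + 1) ^ (-(2 * s)) ≤ lam k)
    (hup : ∀ k : ℕ, lam k ≤ c2 * ((k : ℝ) + 1) ^ (-(2 * s))) :
    ∃ A B : ℝ, 0 < A ∧ A ≤ B ∧ ∃ ρ₀ : ℝ, 0 < ρ₀ ∧
      ∀ ρ : ℝ, 0 < ρ → ρ < ρ₀ →
        A * ρ ^ (-(1 / s)) ≤ (∑' k, lam k / (lam k + ρ ^ 2)) ∧
        (∑' k, lam k / (lam k + ρ ^ 2)) ≤ B * ρ ^ (-(1 / s)) := by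
  have hs0 : (0 : ℝ) < s := by linarith
  have hs1 : (0 : ℝ) < 2 * s - 1 := by linarith
  have hc2 : (0 : ℝ) < c2 := lt_of_lt_of_le hc1 hc12
  set D : ℝ := c1 ^ (1 / (2 * s)) with hD_def
  have hD : 0 < D := Real.rpow_pos_of_pos hc1 _
  refine ⟨D / 4, D / 4 + 2 + c2 / (2 * s - 1), by positivity,
    by have : 0 ≤ c2 / (2 * s - 1) := by positivity
       linarith,
    min 1 ((D / 2) ^ s), lt_min one_pos (Real.rpow_pos_of_pos (by positivity) s), ?_⟩
  intro ρ hρ hρ0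
  have hρ1 : ρ < 1 := lt_of_lt_of_le hρ0 (min_le_left _ _)
  have hρ2 : ρ < (D / 2) ^ s := lt_of_lt_of_le hρ0 (min_le_right _ _)
  set T : ℝ := ρ ^ (-(1 / s)) with hT_def
  have hTpos : 0 < T := Real.rpow_pos_of_pos hρ _
  have hT1 : (1 : ℝ) ≤ T :=
    Real.one_le_rpow_of_pos_of_le_one_of_nonpos hρ hρ1.le
      (neg_nonpos.mpr (by positivity))
  -- positivity of lam
  have hlam : ∀ k, 0 < lam k := fun k =>
    lt_of_lt_of_le (by positivity) (hlow k)
  have hden : ∀ k, 0 < lam k + ρ ^ 2 := fun k => by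
    have := hlam k; positivity
  have hfnonneg : ∀ k, 0 ≤ lam k / (lam k + ρ ^ 2) := fun k =>
    div_nonneg (hlam k).le (hden k).le
  have hfle1 : ∀ k, lam k / (lam k + ρ ^ 2) ≤ 1 := fun k => by
    rw [div_le_one (hden k)]; nlinarith [hlam k, sq_nonneg ρ]
  -- summable comparison
  have hgsum : Summable (fun k : ℕ => ((k : ℝ) + 1) ^ (-(2 * s))) := by
    have h0 : Summable (fun n : ℕ => (n : ℝ) ^ (-(2 * s))) :=
      Real.summable_nat_rpow.mpr (by linarith)
    have := (summable_nat_add_iff 1).mpr h0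
    refine this.congr fun n => ?_
    push_cast
    ring_nf
  have hfleg : ∀ k, lam k / (lam k + ρ ^ 2) ≤
      (c2 / ρ ^ 2) * ((k : ℝ) + 1) ^ (-(2 * s)) := by
    intro k
    have h1 : lam k / (lam k + ρ ^ 2) ≤ lam k / ρ ^ 2 :=
      div_le_div_of_nonneg_left (hlam k).le (by positivity) (by nlinarith [hlam k])
    calc lam k / (lam k + ρ ^ 2) ≤ lam k / ρ ^ 2 := h1
      _ ≤ (c2 * ((k : ℝ) + 1) ^ (-(2 * s))) / ρ ^ 2 := by
          gcongr
          exact hup k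
      _ = (c2 / ρ ^ 2) * ((k : ℝ) + 1) ^ (-(2 * s)) := by ring
  have hfsum : Summable (fun k => lam k / (lam k + ρ ^ 2)) :=
    Summable.of_nonneg_of_le hfnonneg hfleg (hgsum.mul_left _)
  constructor
  · -- LOWER BOUND
    -- ρ^(1/s) < D/2
    have hx : (0 : ℝ) < ρ ^ (1 / s) := Real.rpow_pos_of_pos hρ _
    have hrs : ρ ^ (1 / s) < D / 2 := by
      have h1 : ρ ^ (1 / s) < ((D / 2) ^ s) ^ (1 / s) :=
        Real.rpow_lt_rpow hρ.le hρ2 (by positivity)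
      have h2 : ((D / 2) ^ s) ^ (1 / s) = D / 2 := by
        rw [← Real.rpow_mul (by positivity), mul_one_div, div_self hs0.ne',
          Real.rpow_one]
      linarith [h2 ▸ h1]
    have hTinv : T = (ρ ^ (1 / s))⁻¹ := by
      rw [hT_def, Real.rpow_neg hρ.le]
    have hT'2 : (2 : ℝ) ≤ D * T := by
      rw [hTinv]
      rw [le_mul_inv_iff₀ hx]
      linarith
    set N : ℕ := ⌊D * T⌋₊ with hN_def
    have hDT : (0 : ℝ) ≤ D * T := by positivity
    have hNT : (N : ℝ) ≤ D * T := Nat.floor_le hDT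
    have hTN : D * T / 2 ≤ (N : ℝ) := by
      have := Nat.sub_one_lt_floor (D * T)
      have : D * T - 1 < (N : ℝ) := by exact_mod_cast this
      linarith
    -- each k < N has lam k ≥ ρ²
    have hbig : ∀ k ∈ Finset.range N, (1 : ℝ) / 2 ≤ lam k / (lam k + ρ ^ 2) := by
      intro k hk
      have hkN : (k : ℝ) + 1 ≤ D * T := by
        have : (k + 1 : ℕ) ≤ N := Finset.mem_range.mp hk
        have : ((k + 1 : ℕ) : ℝ) ≤ (N : ℝ) := by exact_mod_cast this
        push_cast at this
        linarith
      have hb1 : (1 : ℝ) ≤ (k : ℝ) + 1 := by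
        have : (0 : ℝ) ≤ (k : ℝ) := Nat.cast_nonneg k
        linarith
      have hDT2s : (D * T) ^ (2 * s) = c1 / ρ ^ 2 := by
        have h1 : D ^ (2 * s) = c1 := by
          rw [hD_def, ← Real.rpow_mul hc1.le, one_div,
            inv_mul_cancel₀ (by positivity : (2 * s) ≠ 0), Real.rpow_one]
        have h2 : T ^ (2 * s) = (ρ ^ 2)⁻¹ := by
          rw [hT_def, ← Real.rpow_mul hρ.le,
            show -(1 / s) * (2 * s) = -(2 : ℝ) by field_simp,
            Real.rpow_neg hρ.le, show ((2 : ℝ)) = ((2 : ℕ) : ℝ) by norm_num,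
            Real.rpow_natCast]
        rw [Real.mul_rpow hD.le hTpos.le, h1, h2, div_eq_mul_inv]
      have hk2s : ((k : ℝ) + 1) ^ (2 * s) ≤ c1 / ρ ^ 2 := by
        rw [← hDT2s]
        exact Real.rpow_le_rpow (by linarith) hkN (by positivity)
      have hrp : 0 < ((k : ℝ) + 1) ^ (2 * s) :=
        Real.rpow_pos_of_pos (by linarith) _
      have hρ2le : ρ ^ 2 ≤ c1 * ((k : ℝ) + 1) ^ (-(2 * s)) := by
        have hmul : ρ ^ 2 * ((k : ℝ) + 1) ^ (2 * s) ≤ c1 := by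
          calc ρ ^ 2 * ((k : ℝ) + 1) ^ (2 * s)
              ≤ ρ ^ 2 * (c1 / ρ ^ 2) :=
                mul_le_mul_of_nonneg_left hk2s (by positivity)
            _ = c1 := by field_simp
        have h := (le_div_iff₀ hrp).mpr hmul
        rw [div_eq_mul_inv] at h
        rw [Real.rpow_neg (by linarith)]
        exact h
      have hlamk : ρ ^ 2 ≤ lam k := le_trans hρ2le (hlow k)
      rw [div_le_div_iff₀ (by norm_num) (hden k)]
      nlinarith [hlam k]
    have hsum : (N : ℝ) * (1 / 2) ≤ ∑ k ∈ Finset.range N, lam k / (lam k + ρ ^ 2) := by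
      have := Finset.card_nsmul_le_sum (Finset.range N) _ _ hbig
      simpa [nsmul_eq_mul, mul_comm] using this
    have htsum : ∑ k ∈ Finset.range N, lam k / (lam k + ρ ^ 2)
        ≤ ∑' k, lam k / (lam k + ρ ^ 2) :=
      Summable.sum_le_tsum _ (fun k _ => hfnonneg k) hfsum
    calc D / 4 * ρ ^ (-(1 / s)) = (D * T / 2) * (1 / 2) := by
          rw [← hT_def]; ring
      _ ≤ (N : ℝ) * (1 / 2) := by linarith
      _ ≤ ∑ k ∈ Finset.range N, lam k / (lam k + ρ ^ 2) := hsum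
      _ ≤ ∑' k, lam k / (lam k + ρ ^ 2) := htsum
  · -- UPPER BOUND
    set M : ℕ := ⌈T⌉₊ with hM_def
    have hM1 : 1 ≤ M := Nat.one_le_iff_ne_zero.mpr (by
      simp [hM_def, Nat.ceil_eq_zero, not_le]
      linarith)
    have hMT : T ≤ (M : ℝ) := Nat.le_ceil T
    have hM2T : (M : ℝ) ≤ 2 * T := by
      have := Nat.ceil_lt_add_one hTpos.le
      have h : (M : ℝ) < T + 1 := this
      linarith
    have hsplit : (∑' k, lam k / (lam k + ρ ^ 2))
        = (∑ i ∈ Finset.range M, lam i / (lam i + ρ ^ 2))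
          + ∑' i, lam (i + M) / (lam (i + M) + ρ ^ 2) :=
      (Summable.sum_add_tsum_nat_add M hfsum).symm
    have hhead : (∑ i ∈ Finset.range M, lam i / (lam i + ρ ^ 2)) ≤ (M : ℝ) := by
      calc (∑ i ∈ Finset.range M, lam i / (lam i + ρ ^ 2))
          ≤ ∑ i ∈ Finset.range M, (1 : ℝ) :=
            Finset.sum_le_sum fun i _ => hfle1 i
        _ = (M : ℝ) := by simp
    have htailsum : Summable (fun i => lam (i + M) / (lam (i + M) + ρ ^ 2)) :=
      (summable_nat_add_iff M).mpr hfsum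
    have hgtail : Summable (fun i : ℕ => (((i + M : ℕ) : ℝ) + 1) ^ (-(2 * s))) := by
      have := (summable_nat_add_iff M).mpr hgsum
      exact this.congr fun n => by push_cast; ring_nf
    have htail : (∑' i, lam (i + M) / (lam (i + M) + ρ ^ 2))
        ≤ (c2 / ρ ^ 2) * ((M : ℝ) ^ (1 - 2 * s) / (2 * s - 1)) := by
      calc (∑' i, lam (i + M) / (lam (i + M) + ρ ^ 2))
          ≤ ∑' i : ℕ, (c2 / ρ ^ 2) * (((i + M : ℕ) : ℝ) + 1) ^ (-(2 * s)) := by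
            apply Summable.tsum_le_tsum _ htailsum (hgtail.mul_left _)
            intro i
            exact hfleg (i + M)
        _ = (c2 / ρ ^ 2) * ∑' i : ℕ, (((i + M : ℕ) : ℝ) + 1) ^ (-(2 * s)) :=
            tsum_mul_left
        _ ≤ (c2 / ρ ^ 2) * ((M : ℝ) ^ (1 - 2 * s) / (2 * s - 1)) := by
            gcongr
            exact moderated_tail hs M hM1
    have hMpow : (M : ℝ) ^ (1 - 2 * s) ≤ ρ ^ 2 * T := by
      have h1 : (M : ℝ) ^ (1 - 2 * s) ≤ T ^ (1 - 2 * s) :=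
        Real.rpow_le_rpow_of_nonpos hTpos hMT (by linarith)
      have h2 : T ^ (1 - 2 * s) = ρ ^ 2 * T := by
        rw [hT_def, ← Real.rpow_mul hρ.le, ← Real.rpow_natCast ρ 2]
        rw [show (((2 : ℕ) : ℝ)) = (2 : ℝ) by norm_num]
        rw [← Real.rpow_add hρ]
        congr 1
        field_simp
        ring
      linarith [h2 ▸ h1]
    have hfinal : (c2 / ρ ^ 2) * ((M : ℝ) ^ (1 - 2 * s) / (2 * s - 1))
        ≤ c2 / (2 * s - 1) * T := by
      have h3 : (c2 / ρ ^ 2) * (M : ℝ) ^ (1 - 2 * s) ≤ (c2 / ρ ^ 2) * (ρ ^ 2 * T) := by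
        gcongr
      have he : (c2 / ρ ^ 2) * (ρ ^ 2 * T) = c2 * T := by
        field_simp
      calc (c2 / ρ ^ 2) * ((M : ℝ) ^ (1 - 2 * s) / (2 * s - 1))
          = ((c2 / ρ ^ 2) * (M : ℝ) ^ (1 - 2 * s)) / (2 * s - 1) := by ring
        _ ≤ (c2 * T) / (2 * s - 1) :=
            div_le_div_of_nonneg_right (by linarith [h3, he]) hs1.le
        _ = c2 / (2 * s - 1) * T := by ring
    calc (∑' k, lam k / (lam k + ρ ^ 2))
        ≤ (M : ℝ) + (c2 / ρ ^ 2) * ((M : ℝ) ^ (1 - 2 * s) / (2 * s - 1)) := by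
          rw [hsplit]; exact add_le_add hhead htail
      _ ≤ 2 * T + c2 / (2 * s - 1) * T := add_le_add hM2T hfinal
      _ ≤ (D / 4 + 2 + c2 / (2 * s - 1)) * ρ ^ (-(1 / s)) := by
          rw [← hT_def]
          have : 0 ≤ D / 4 * T := by positivity
          nlinarith
end

section
/- Let lambda_k asymp k^{-2s} with s > 1/2 and let rho > 0 be small. Then sum_{k>=1} (lambda_k/(lambda_k+rho^2))^4 <= sum_{k>=1} (lambda_k/(lambda_k+rho^2))^2, and moreover the ratio [sum_k (lambda_k/(lambda_k+rho^2))^4] / [sum_k (lambda_k/(lambda_k+rho^2))^2]^2 <= C rho^{1/s} for some constant C and all small rho, so it tends to 0 as rho -> 0. -/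
/-- If `λₖ ≍ k^{-2s}` with `s > 1/2`, then `∑ₖ (λₖ/(λₖ+ρ²))⁴ ≤ ∑ₖ (λₖ/(λₖ+ρ²))²`
and the ratio `∑ (·)⁴ / (∑ (·)²)²` is at most `C ρ^{1/s}` for small `ρ`,
so it tends to `0` as `ρ → 0`. -/
theorem fourth_moment_ratio_vanishes
    (s c1 c2 : ℝ) (hs : 1 / 2 < s) (hc1 : 0 < c1) (hc12 : c1 ≤ c2)
    (lam : ℕ → ℝ)
    (hlow : ∀ k : ℕ, c1 * ((k : ℝ) + 1) ^ (-(2 * s)) ≤ lam k)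
    (hup : ∀ k : ℕ, lam k ≤ c2 * ((k : ℝ) + 1) ^ (-(2 * s))) :
    (∀ ρ : ℝ, 0 < ρ →
      (∑' k, (lam k / (lam k + ρ ^ 2)) ^ 4) ≤ (∑' k, (lam k / (lam k + ρ ^ 2)) ^ 2)) ∧
    ∃ C : ℝ, 0 < C ∧ ∃ ρ₀ : ℝ, 0 < ρ₀ ∧
      ∀ ρ : ℝ, 0 < ρ → ρ < ρ₀ →
        (∑' k, (lam k / (lam k + ρ ^ 2)) ^ 4) /
            (∑' k, (lam k / (lam k + ρ ^ 2)) ^ 2) ^ 2 ≤ C * ρ ^ (1 / s) := by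
  have hs0 : (0:ℝ) < s := by linarith
  have hlam : ∀ k, 0 < lam k := fun k =>
    lt_of_lt_of_le (by positivity) (hlow k)
  -- basic summability
  have hbase : Summable (fun k : ℕ => ((k:ℝ)+1) ^ (-(2*s))) := by
    have h1 : Summable (fun n : ℕ => (n:ℝ) ^ (-(2*s))) :=
      Real.summable_nat_rpow.mpr (by linarith)
    have h2 := (summable_nat_add_iff 1).mpr h1
    refine h2.congr fun n => ?_
    push_cast
    ring_nf
  -- per-ρ facts
  have key : ∀ ρ : ℝ, 0 < ρ →
      Summable (fun k => (lam k / (lam k + ρ ^ 2)) ^ 2) ∧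
      Summable (fun k => (lam k / (lam k + ρ ^ 2)) ^ 4) ∧
      (∑' k, (lam k / (lam k + ρ ^ 2)) ^ 4) ≤ (∑' k, (lam k / (lam k + ρ ^ 2)) ^ 2) := by
    intro ρ hρ
    set t := fun k => lam k / (lam k + ρ ^ 2) with ht
    have hd : ∀ k, 0 < lam k + ρ ^ 2 := fun k => add_pos (hlam k) (pow_pos hρ 2)
    have ht0 : ∀ k, 0 ≤ t k := fun k => div_nonneg (hlam k).le (hd k).le
    have ht1 : ∀ k, t k ≤ 1 := fun k => by
      rw [ht, div_le_one (hd k)]; nlinarith [sq_nonneg ρ]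
    have htb : ∀ k, t k ≤ c2 / ρ ^ 2 * ((k:ℝ)+1) ^ (-(2*s)) := by
      intro k
      have h1 : t k ≤ lam k / ρ ^ 2 := by
        apply div_le_div_of_nonneg_left (hlam k).le (pow_pos hρ 2)
        nlinarith [(hlam k).le]
      refine h1.trans ?_
      rw [div_mul_eq_mul_div, div_le_div_iff₀ (by positivity) (by positivity)]
      nlinarith [hup k]
    have hsum2 : Summable (fun k => t k ^ 2) := by
      refine Summable.of_nonneg_of_le (fun k => by positivity)
        (fun k => ?_) (hbase.mul_left (c2 / ρ ^ 2))
      calc t k ^ 2 ≤ t k := pow_le_of_le_one (ht0 k) (ht1 k) (by norm_num)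
        _ ≤ _ := htb k
    have hsum4 : Summable (fun k => t k ^ 4) := by
      refine Summable.of_nonneg_of_le (fun k => by positivity)
        (fun k => ?_) hsum2
      exact pow_le_pow_of_le_one (ht0 k) (ht1 k) (by norm_num)
    exact ⟨hsum2, hsum4, Summable.tsum_le_tsum
      (fun k => pow_le_pow_of_le_one (ht0 k) (ht1 k) (by norm_num)) hsum4 hsum2⟩
  refine ⟨fun ρ hρ => (key ρ hρ).2.2, ?_⟩
  set a := c1 ^ (1/(2*s)) with ha
  have ha0 : 0 < a := Real.rpow_pos_of_pos hc1 _
  refine ⟨8 / a, by positivity, (a/2) ^ s, Real.rpow_pos_of_pos (by positivity) _, ?_⟩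
  intro ρ hρ hρ₀
  obtain ⟨hsum2, hsum4, h42⟩ := key ρ hρ
  set M := a * ρ ^ (-(1/s)) with hM
  have hρs : (0:ℝ) < ρ ^ (1/s) := Real.rpow_pos_of_pos hρ _
  have hρlt : ρ ^ (1/s) < a / 2 := by
    have h1 : ρ ^ (1/s) < ((a/2) ^ s) ^ (1/s) :=
      Real.rpow_lt_rpow hρ.le hρ₀ (by positivity)
    have h2 : ((a/2) ^ s) ^ (1/s) = a / 2 := by
      rw [← Real.rpow_mul (by positivity : (0:ℝ) ≤ a/2), mul_one_div,
        div_self hs0.ne', Real.rpow_one]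
    rw [h2] at h1; exact h1
  have hMval : M = a / ρ ^ (1/s) := by
    rw [hM, Real.rpow_neg hρ.le]; ring
  have hM2 : 2 < M := by
    rw [hMval, lt_div_iff₀ hρs]
    nlinarith
  have hM0 : 0 < M := by linarith
  set N := ⌊M⌋₊ with hN
  have hNM : M / 2 < (N:ℝ) := by
    have := Nat.sub_one_lt_floor M
    have h2 : M / 2 ≤ M - 1 := by linarith
    exact lt_of_le_of_lt h2 this
  have hNle : (N:ℝ) ≤ M := Nat.floor_le hM0.le
  -- each of the first N terms is ≥ 1/2
  have hterm : ∀ k ∈ Finset.range N, (1:ℝ)/4 ≤ (lam k / (lam k + ρ ^ 2)) ^ 2 := by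
    intro k hk
    have hk1 : (k:ℝ) + 1 ≤ M := by
      have : (k:ℝ) + 1 ≤ (N:ℝ) := by
        have := Finset.mem_range.mp hk
        exact_mod_cast Nat.succ_le_of_lt this
      linarith
    have hk0 : (0:ℝ) < (k:ℝ) + 1 := by positivity
    have hrp : M ^ (-(2*s)) ≤ ((k:ℝ)+1) ^ (-(2*s)) :=
      Real.rpow_le_rpow_of_nonpos hk0 hk1 (by linarith)
    have hMpow : c1 * M ^ (-(2*s)) = ρ ^ 2 := by
      rw [hM, Real.mul_rpow ha0.le (Real.rpow_pos_of_pos hρ _).le, ha,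
        ← Real.rpow_natCast ρ 2, ← Real.rpow_mul hc1.le, ← Real.rpow_mul hρ.le]
      have e1 : 1/(2*s) * -(2*s) = -1 := by field_simp
      have e2 : -(1/s) * -(2*s) = ((2:ℕ):ℝ) := by push_cast; field_simp
      rw [e1, e2, Real.rpow_neg_one]
      field_simp
    have hlamk : ρ ^ 2 ≤ lam k := by
      calc ρ ^ 2 = c1 * M ^ (-(2*s)) := hMpow.symm
        _ ≤ c1 * ((k:ℝ)+1) ^ (-(2*s)) := by
            exact mul_le_mul_of_nonneg_left hrp hc1.le
        _ ≤ lam k := hlow k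
    have ht : (1:ℝ)/2 ≤ lam k / (lam k + ρ ^ 2) := by
      rw [le_div_iff₀ (by nlinarith [hlam k, sq_nonneg ρ])]
      linarith
    nlinarith [ht]
  set S2 := ∑' k, (lam k / (lam k + ρ ^ 2)) ^ 2 with hS2
  have hSlow : M / 8 ≤ S2 := by
    have h1 : ∑ k ∈ Finset.range N, (lam k / (lam k + ρ ^ 2)) ^ 2 ≤ S2 :=
      Summable.sum_le_tsum _ (fun k _ => by positivity) hsum2
    have h2 : (N:ℝ) * (1/4) ≤ ∑ k ∈ Finset.range N, (lam k / (lam k + ρ ^ 2)) ^ 2 := by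
      calc (N:ℝ) * (1/4) = ∑ _k ∈ Finset.range N, (1:ℝ)/4 := by
            rw [Finset.sum_const, Finset.card_range]; ring
        _ ≤ _ := Finset.sum_le_sum hterm
    linarith
  have hS2pos : 0 < S2 := lt_of_lt_of_le (by linarith) hSlow
  calc (∑' k, (lam k / (lam k + ρ ^ 2)) ^ 4) / S2 ^ 2
      ≤ S2 / S2 ^ 2 := by gcongr
    _ = 1 / S2 := by field_simp [sq]
    _ ≤ 1 / (M/8) := by
        apply one_div_le_one_div_of_le (by linarith) hSlow
    _ = 8 / a * ρ ^ (1/s) := by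
        rw [hMval]; field_simp
end

section
/- Let K_n >= 1 be an integer and a_n > 0 with n a_n^2 <= t_0 (t_0 from the cosh Taylor bound). Then (1/2^{2 K_n}) * sum over all pairs xi, xi' in {-1,+1}^{K_n} of (1 + a_n^2 sum_{k=1}^{K_n} xi_k xi'_k)^n <= exp( K_n * (cosh(n a_n^2) - 1) ) <= exp( K_n * ( (n a_n^2)^2/2 + C (n a_n^2)^3 ) ) for some absolute constant C. -/
open Finset Real Nat

/-- `Real.exp` as a tsum. -/
private lemma exp_tsum (y : ℝ) : Real.exp y = ∑' k : ℕ, y ^ k / k ! := by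
  rw [Real.exp_eq_exp_ℝ, NormedSpace.exp_eq_tsum_div]

/-- Pointwise bound: `(1+x)^n + (1-x)^n ≤ 2 cosh (n x)`. -/
private lemma pointwise_bound (n : ℕ) (x : ℝ) :
    (1 + x) ^ n + (1 - x) ^ n ≤ 2 * Real.cosh ((n : ℝ) * x) := by
  set y : ℝ := (n : ℝ) * x with hy
  have hfun : (fun k : ℕ => (y ^ k + (-y) ^ k) / (k ! : ℝ))
      = fun k : ℕ => y ^ k / (k ! : ℝ) + (-y) ^ k / (k ! : ℝ) := by
    funext k; ring
  have hsum : Summable (fun k : ℕ => (y ^ k + (-y) ^ k) / (k ! : ℝ)) := by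
    rw [hfun]
    exact (Real.summable_pow_div_factorial y).add (Real.summable_pow_div_factorial (-y))
  have htsum : ∑' k : ℕ, (y ^ k + (-y) ^ k) / (k ! : ℝ) = 2 * Real.cosh y := by
    rw [show (∑' k : ℕ, (y ^ k + (-y) ^ k) / (k ! : ℝ)) = ∑' k : ℕ, (y ^ k / (k ! : ℝ) + (-y) ^ k / (k ! : ℝ)) by rw [← hfun],
      Summable.tsum_add (Real.summable_pow_div_factorial y) (Real.summable_pow_div_factorial (-y)),
      ← exp_tsum, ← exp_tsum, Real.cosh_eq]
    ring
  -- binomial expansion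
  have hbin : (1 + x) ^ n + (1 - x) ^ n
      = ∑ k ∈ range (n + 1), (x ^ k + (-x) ^ k) * (n.choose k : ℝ) := by
    have e1 : (1 + x) ^ n = ∑ k ∈ range (n + 1), x ^ k * (n.choose k : ℝ) := by
      rw [add_comm, add_pow]; simp
    have e2 : (1 - x) ^ n = ∑ k ∈ range (n + 1), (-x) ^ k * (n.choose k : ℝ) := by
      rw [sub_eq_add_neg, add_comm, add_pow]; simp
    rw [e1, e2, ← Finset.sum_add_distrib]
    congr 1; ext k; ring
  rw [hbin, ← htsum]
  have hterm : ∀ k ∈ range (n + 1),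
      (x ^ k + (-x) ^ k) * (n.choose k : ℝ) ≤ (y ^ k + (-y) ^ k) / k ! := by
    intro k _
    rcases Nat.even_or_odd k with hk | hk
    · have hx : (-x) ^ k = x ^ k := hk.neg_pow x
      have hyk : (-y) ^ k = y ^ k := hk.neg_pow y
      have hxnn : (0 : ℝ) ≤ x ^ k := hk.pow_nonneg x
      have hchoose : (n.choose k : ℝ) ≤ (n : ℝ) ^ k / k ! := Nat.choose_le_pow_div k n
      have : x ^ k * (n.choose k : ℝ) ≤ x ^ k * ((n : ℝ) ^ k / k !) :=
        mul_le_mul_of_nonneg_left hchoose hxnn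
      calc (x ^ k + (-x) ^ k) * (n.choose k : ℝ) = 2 * (x ^ k * (n.choose k : ℝ)) := by
            rw [hx]; ring
        _ ≤ 2 * (x ^ k * ((n : ℝ) ^ k / k !)) := by linarith
        _ = (y ^ k + (-y) ^ k) / k ! := by rw [hyk, hy, mul_pow]; ring
    · have hx : (-x) ^ k = -(x ^ k) := hk.neg_pow x
      have hyk : (-y) ^ k = -(y ^ k) := hk.neg_pow y
      rw [hx, hyk]; simp
  have hnn : ∀ k : ℕ, 0 ≤ (y ^ k + (-y) ^ k) / k ! := by
    intro k
    rcases Nat.even_or_odd k with hk | hk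
    · have : (-y) ^ k = y ^ k := hk.neg_pow y
      rw [this]
      have := hk.pow_nonneg y
      positivity
    · rw [hk.neg_pow y]; simp
  calc ∑ k ∈ range (n + 1), (x ^ k + (-x) ^ k) * (n.choose k : ℝ)
      ≤ ∑ k ∈ range (n + 1), (y ^ k + (-y) ^ k) / k ! := Finset.sum_le_sum hterm
    _ ≤ ∑' k : ℕ, (y ^ k + (-y) ^ k) / k ! := Summable.sum_le_tsum _ (fun k _ => hnn k) hsum

private def sgn (b : Bool) : ℝ := if b then 1 else -1

private lemma exp_factorization (K : ℕ) (t : ℝ) :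
    ∑ ξ : Fin K → Bool, ∑ ξ' : Fin K → Bool,
        Real.exp (t * ∑ k : Fin K, sgn (ξ k) * sgn (ξ' k))
      = 2 ^ (2 * K) * Real.cosh t ^ K := by
  have inner : ∀ ξ : Fin K → Bool,
      ∑ ξ' : Fin K → Bool, Real.exp (t * ∑ k : Fin K, sgn (ξ k) * sgn (ξ' k))
        = (2 * Real.cosh t) ^ K := by
    intro ξ
    have h1 : ∀ ξ' : Fin K → Bool,
        Real.exp (t * ∑ k : Fin K, sgn (ξ k) * sgn (ξ' k))
          = ∏ k : Fin K, Real.exp (t * (sgn (ξ k) * sgn (ξ' k))) := by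
      intro ξ'
      rw [← Real.exp_sum, Finset.mul_sum]
    simp_rw [h1]
    rw [← Fintype.prod_sum (fun k b => Real.exp (t * (sgn (ξ k) * sgn b)))]
    have h2 : ∀ k : Fin K, ∑ b : Bool, Real.exp (t * (sgn (ξ k) * sgn b))
        = 2 * Real.cosh t := by
      intro k
      rw [Fintype.sum_bool]
      cases hb : ξ k <;> simp [sgn, Real.cosh_eq, mul_comm] <;> ring_nf
    simp_rw [h2]
    simp
  simp_rw [inner]
  rw [Finset.sum_const, Finset.card_univ, nsmul_eq_mul]
  have hcard : (Fintype.card (Fin K → Bool) : ℝ) = 2 ^ K := by simp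
  rw [hcard, mul_pow, two_mul K, pow_add]
  ring

/-- Second moment (chi-square) bound for the mixture likelihood ratio: with `t₀`
from the cosh Taylor bound, averaging `(1 + aₙ² ∑ ξₖ ξ'ₖ)ⁿ` over all pairs of sign
vectors is at most `exp(Kₙ (cosh(n aₙ²) - 1))`, which is at most
`exp(Kₙ ((n aₙ²)²/2 + C (n aₙ²)³))` for an absolute constant `C`. -/
theorem chi_square_second_moment_bound :
    ∃ t₀ : ℝ, 0 < t₀ ∧ ∃ C : ℝ, 0 < C ∧
      ∀ (n K : ℕ) (a : ℝ), 1 ≤ K → 0 < a → (n : ℝ) * a ^ 2 ≤ t₀ →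
        (1 / 2 ^ (2 * K) : ℝ) *
          ∑ ξ : Fin K → Bool, ∑ ξ' : Fin K → Bool,
            (1 + a ^ 2 * ∑ k : Fin K,
              (if ξ k then (1 : ℝ) else -1) * (if ξ' k then (1 : ℝ) else -1)) ^ n
          ≤ Real.exp ((K : ℝ) * (Real.cosh ((n : ℝ) * a ^ 2) - 1)) ∧
        Real.exp ((K : ℝ) * (Real.cosh ((n : ℝ) * a ^ 2) - 1))
          ≤ Real.exp ((K : ℝ) *
              (((n : ℝ) * a ^ 2) ^ 2 / 2 + C * ((n : ℝ) * a ^ 2) ^ 3)) := by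
  refine ⟨1, one_pos, 1, one_pos, ?_⟩
  intro n K a hK ha ht
  set t : ℝ := (n : ℝ) * a ^ 2 with htdef
  have ht0 : 0 ≤ t := by positivity
  set P : (Fin K → Bool) → (Fin K → Bool) → ℝ :=
    fun ξ ξ' => ∑ k : Fin K, sgn (ξ k) * sgn (ξ' k) with hP
  have hsgn : ∀ b : Bool, (if b then (1 : ℝ) else -1) = sgn b := fun b => rfl
  simp_rw [hsgn]
  constructor
  · -- first inequality
    set S : ℝ := ∑ ξ : Fin K → Bool, ∑ ξ' : Fin K → Bool, (1 + a ^ 2 * P ξ ξ') ^ n with hS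
    have hflip : S = ∑ ξ : Fin K → Bool, ∑ ξ' : Fin K → Bool, (1 - a ^ 2 * P ξ ξ') ^ n := by
      rw [hS]
      refine Finset.sum_congr rfl fun ξ _ => ?_
      have hbij : Function.Bijective (fun ξ' : Fin K → Bool => fun k => !(ξ' k)) := by
        apply Function.Involutive.bijective
        intro f; funext k; simp
      rw [← Function.Bijective.sum_comp hbij (fun ξ' => (1 - a ^ 2 * P ξ ξ') ^ n)]
      refine Finset.sum_congr rfl fun ξ' _ => ?_
      have : P ξ (fun k => !(ξ' k)) = -P ξ ξ' := by
        rw [hP, ← Finset.sum_neg_distrib]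
        refine Finset.sum_congr rfl fun k _ => ?_
        have hns : sgn (!(ξ' k)) = - sgn (ξ' k) := by
          cases h : ξ' k <;> simp [sgn]
        show sgn (ξ k) * sgn (!(ξ' k)) = -(sgn (ξ k) * sgn (ξ' k))
        rw [hns]; ring
      rw [this]
      ring_nf
    have hexp1 := exp_factorization K t
    have hexp2 := exp_factorization K (-t)
    have key : 2 * S ≤ 2 * (2 ^ (2 * K) * Real.cosh t ^ K) := by
      have h2S : 2 * S = ∑ ξ : Fin K → Bool, ∑ ξ' : Fin K → Bool,
          ((1 + a ^ 2 * P ξ ξ') ^ n + (1 - a ^ 2 * P ξ ξ') ^ n) := by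
        rw [two_mul]
        nth_rewrite 2 [hflip]
        rw [hS, ← Finset.sum_add_distrib]
        refine Finset.sum_congr rfl fun ξ _ => ?_
        rw [← Finset.sum_add_distrib]
      rw [h2S]
      calc ∑ ξ : Fin K → Bool, ∑ ξ' : Fin K → Bool,
            ((1 + a ^ 2 * P ξ ξ') ^ n + (1 - a ^ 2 * P ξ ξ') ^ n)
          ≤ ∑ ξ : Fin K → Bool, ∑ ξ' : Fin K → Bool,
            (Real.exp (t * P ξ ξ') + Real.exp (-t * P ξ ξ')) := by
            refine Finset.sum_le_sum fun ξ _ => Finset.sum_le_sum fun ξ' _ => ?_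
            have h := pointwise_bound n (a ^ 2 * P ξ ξ')
            have hrw : (n : ℝ) * (a ^ 2 * P ξ ξ') = t * P ξ ξ' := by rw [htdef]; ring
            rw [hrw, Real.cosh_eq] at h
            have hneg : -t * P ξ ξ' = -(t * P ξ ξ') := by ring
            rw [hneg]
            linarith
        _ = 2 * (2 ^ (2 * K) * Real.cosh t ^ K) := by
            simp_rw [Finset.sum_add_distrib]
            rw [hexp1]
            have : (∑ ξ : Fin K → Bool, ∑ ξ' : Fin K → Bool, Real.exp (-t * P ξ ξ'))
                = 2 ^ (2 * K) * Real.cosh (-t) ^ K := hexp2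
            rw [this, Real.cosh_neg]
            ring
    have hSle : S ≤ 2 ^ (2 * K) * Real.cosh t ^ K := by linarith
    have hpow : (0 : ℝ) < 2 ^ (2 * K) := by positivity
    calc (1 / 2 ^ (2 * K) : ℝ) * S ≤ (1 / 2 ^ (2 * K) : ℝ) * (2 ^ (2 * K) * Real.cosh t ^ K) := by
          apply mul_le_mul_of_nonneg_left hSle
          positivity
      _ = Real.cosh t ^ K := by field_simp
      _ ≤ Real.exp ((K : ℝ) * (Real.cosh t - 1)) := by
          have h1 : Real.cosh t ≤ Real.exp (Real.cosh t - 1) := by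
            have := Real.add_one_le_exp (Real.cosh t - 1)
            linarith
          calc Real.cosh t ^ K ≤ Real.exp (Real.cosh t - 1) ^ K :=
                pow_le_pow_left₀ (Real.cosh_pos t).le h1 K
            _ = Real.exp ((K : ℝ) * (Real.cosh t - 1)) := by
                rw [← Real.exp_nat_mul]
  · -- second inequality
    rw [Real.exp_le_exp]
    have htaylor : Real.cosh t - 1 ≤ t ^ 2 / 2 + 1 * t ^ 3 := by
      have habs : |t| ≤ 1 := by rw [abs_of_nonneg ht0]; exact ht
      have habs' : |(-t)| ≤ 1 := by rwa [abs_neg]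
      have h1 := Real.exp_bound habs (n := 3) (by norm_num)
      have h2 := Real.exp_bound habs' (n := 3) (by norm_num)
      rw [abs_of_nonneg ht0] at h1
      rw [abs_neg, abs_of_nonneg ht0] at h2
      have hs1 : ∑ i ∈ Finset.range 3, t ^ i / (i ! : ℝ) = 1 + t + t ^ 2 / 2 := by
        rw [Finset.sum_range_succ, Finset.sum_range_succ, Finset.sum_range_succ,
          Finset.sum_range_zero]
        norm_num [Nat.factorial]
      have hs2 : ∑ i ∈ Finset.range 3, (-t) ^ i / (i ! : ℝ) = 1 - t + t ^ 2 / 2 := by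
        rw [Finset.sum_range_succ, Finset.sum_range_succ, Finset.sum_range_succ,
          Finset.sum_range_zero]
        norm_num [Nat.factorial]; ring
      rw [hs1] at h1
      rw [hs2] at h2
      have hb1 := (abs_le.mp h1).2
      have hb2 := (abs_le.mp h2).2
      norm_num [Nat.factorial] at hb1 hb2
      rw [Real.cosh_eq]
      nlinarith [pow_nonneg ht0 3]
    have hK0 : (0 : ℝ) ≤ (K : ℝ) := Nat.cast_nonneg K
    nlinarith [htaylor]
end
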